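/- Let L be a Hermitian operator on ℂ^d with 0 ⪯ L ⪯ I, let ψ ∈ ℂ^d be a unit vector with Lψ = ψ, let τ ≥ 1 be such that ⟨φ|L|φ⟩ ≤ 1 − 1/τ for every unit vector φ orthogonal to ψ, and let ρ be a density matrix on ℂ^d. Let m ≥ 1, δ ∈ (0,1), ε > 0 and ε' ≥ 0 with ε > τε', and let ω₁, …, ω_T be independent, identically distributed real random variables with E[ω₁] = tr(Lρ), values in [−1, 2^m] almost surely, and Var[ω₁] ≤ 3.25. If T ≥ (6.5/(ε/τ − ε')² + (2·2^m)/(3(ε/τ − ε')))·ln(1/δ) and ⟨ψ|ρ|ψ⟩ < 1 − ε, then the probability that (1/T)·Σ_t ω_t ≥ 1 − ε' is at most δ. -/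

import Mathlib

/-!
The spectral gap gives the operator inequality `L ≤ (1 - 1/τ) I + (1/τ) |ψ⟩⟨ψ|`: on the
orthogonal complement of `ψ` the form of `L` is at most `1 - 1/τ`, and `ψ` is an eigenvector of
both sides with eigenvalue `1`. Tracing against `ρ` gives `tr(Lρ) ≤ 1 - (1 - ⟨ψ|ρ|ψ⟩)/τ`, so
low fidelity forces the mean of every `ω_t` below `1 - ε/τ`. The sample mean then has to exceed
its expectation by at least `a = ε/τ - ε'`, which the one-sided Bernstein inequality (a Chernoff
bound with the moment generating function estimated through
`exp u ≤ 1 + u + u² / (2 (1 - c/3))` for `u ≤ c < 3`) bounds by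
`exp (-T a² / (6.5 + (2/3) 2^m a)) ≤ δ`.
-/

open Matrix MeasureTheory ProbabilityTheory Real
open scoped ComplexOrder

lemma exp_le_one_add_add_sq_div_two_of_nonpos {u : ℝ} (hu : u ≤ 0) :
    exp u ≤ 1 + u + u ^ 2 / 2 := by
  have hf (y : ℝ) : HasDerivAt (fun y ↦ 1 + y + y ^ 2 / 2 - exp y) (1 + y - exp y) y := by
    have hsq : HasDerivAt (fun y : ℝ ↦ y ^ 2 / 2) y y := by
      simpa using (hasDerivAt_pow 2 y).div_const 2
    exact (((hasDerivAt_id' y).const_add 1).add hsq).sub (hasDerivAt_exp y)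
  have hanti := antitone_of_deriv_nonpos (fun y ↦ (hf y).differentiableAt)
    fun y ↦ by rw [(hf y).deriv]; linarith [add_one_le_exp y]
  simpa using hanti hu

lemma exp_le_one_add_add_sq_div_of_nonneg_of_lt_three {u : ℝ} (hu : 0 ≤ u) (hu3 : u < 3) :
    exp u ≤ 1 + u + u ^ 2 / (2 * (1 - u / 3)) := by
  have hexp : HasSum (fun n : ℕ ↦ u ^ (n + 2) / (n + 2).factorial) (exp u - (1 + u)) := by
    have := (hasSum_nat_add_iff' 2).mpr
      (exp_eq_exp_ℝ ▸ NormedSpace.expSeries_div_hasSum_exp (𝔸 := ℝ) u)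
    simpa [Finset.sum_range_succ] using this
  have hgeom : HasSum (fun n : ℕ ↦ u ^ 2 / 2 * (u / 3) ^ n) (u ^ 2 / 2 * (1 - u / 3)⁻¹) :=
    (hasSum_geometric_of_lt_one (by positivity) (by linarith)).mul_left _
  have hterm (n : ℕ) : u ^ (n + 2) / (n + 2).factorial ≤ u ^ 2 / 2 * (u / 3) ^ n := by
    have hfact : (2 * 3 ^ n : ℝ) ≤ (n + 2).factorial := by
      exact_mod_cast add_comm n 2 ▸ Nat.factorial_mul_pow_le_factorial (m := 2) (n := n)
    rw [div_pow, pow_add, div_le_iff₀ (by positivity)]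
    calc u ^ n * u ^ 2 = u ^ 2 / 2 * (u ^ n / 3 ^ n) * (2 * 3 ^ n) := by field_simp
      _ ≤ u ^ 2 / 2 * (u ^ n / 3 ^ n) * (n + 2).factorial := by gcongr
  have := hasSum_le hterm hexp hgeom
  rw [div_mul_eq_div_div, div_eq_mul_inv _ (1 - u / 3)]
  linarith

lemma exp_le_one_add_add_sq_div_of_le {u c : ℝ} (huc : u ≤ c) (hc : 0 ≤ c) (hc3 : c < 3) :
    exp u ≤ 1 + u + u ^ 2 / (2 * (1 - c / 3)) := by
  rcases le_total u 0 with hu | hu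
  · calc exp u ≤ 1 + u + u ^ 2 / 2 := exp_le_one_add_add_sq_div_two_of_nonpos hu
      _ ≤ 1 + u + u ^ 2 / (2 * (1 - c / 3)) := by
        gcongr 1 + u + u ^ 2 / ?_
        · nlinarith
        · linarith
  · calc exp u ≤ 1 + u + u ^ 2 / (2 * (1 - u / 3)) :=
          exp_le_one_add_add_sq_div_of_nonneg_of_lt_three hu (by linarith)
      _ ≤ 1 + u + u ^ 2 / (2 * (1 - c / 3)) := by
        gcongr 1 + u + u ^ 2 / (2 * ?_)
        · linarith
        · linarith

section Bernstein

variable {Ω : Type*} [MeasurableSpace Ω] {μ : Measure Ω} [IsProbabilityMeasure μ]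

lemma integrable_exp_mul_of_ae_le {Y : Ω → ℝ} {b s : ℝ} (hY : AEMeasurable Y μ)
    (hYb : ∀ᵐ x ∂μ, Y x ≤ b) (hs : 0 ≤ s) : Integrable (fun x ↦ exp (s * Y x)) μ := by
  refine Integrable.mono' (integrable_const (exp (s * b)))
    (hY.const_mul s).exp.aestronglyMeasurable ?_
  filter_upwards [hYb] with x hx
  rw [Real.norm_eq_abs, abs_of_pos (exp_pos _), exp_le_exp]
  exact mul_le_mul_of_nonneg_left hx hs

lemma mgf_le_exp_bernstein {X : Ω → ℝ} {b s : ℝ} (hX : MemLp X 2 μ)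
    (hXb : ∀ᵐ x ∂μ, X x - μ[X] ≤ b) (hb : 0 ≤ b) (hs : 0 ≤ s) (hsb : s * b < 3) :
    mgf X μ s ≤ exp (s * μ[X] + s ^ 2 * variance X μ / (2 * (1 - s * b / 3))) := by
  set Y : Ω → ℝ := fun x ↦ X x - μ[X]
  set K := s ^ 2 / (2 * (1 - s * b / 3))
  have hY : MemLp Y 2 μ := hX.sub (memLp_const _)
  have hYint : Integrable Y μ := hY.integrable one_le_two
  have hY0 : μ[Y] = 0 := by simp [Y, integral_sub (hX.integrable one_le_two)]
  have hYsq : ∫ x, Y x ^ 2 ∂μ = variance X μ := (variance_eq_integral hX.aemeasurable).symm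
  have hpoint : ∀ᵐ x ∂μ, exp (s * Y x) ≤ 1 + s * Y x + K * Y x ^ 2 := by
    filter_upwards [hXb] with x hx
    have := exp_le_one_add_add_sq_div_of_le (mul_le_mul_of_nonneg_left hx hs)
      (mul_nonneg hs hb) hsb
    rw [mul_pow] at this
    convert this using 2
    ring
  have hexpY : Integrable (fun x ↦ exp (s * Y x)) μ :=
    integrable_exp_mul_of_ae_le hY.aemeasurable hXb hs
  have hlin : Integrable (fun x ↦ 1 + s * Y x) μ := (integrable_const 1).add (hYint.const_mul s)
  have hquad : Integrable (fun x ↦ K * Y x ^ 2) μ := hY.integrable_sq.const_mul K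
  have hmgfY : mgf Y μ s ≤ exp (K * variance X μ) := calc
    mgf Y μ s ≤ ∫ x, 1 + s * Y x + K * Y x ^ 2 ∂μ := integral_mono_ae hexpY (hlin.add hquad) hpoint
    _ = 1 + K * variance X μ := by
      rw [integral_add hlin hquad, integral_add (integrable_const 1) (hYint.const_mul s),
        integral_const_mul, integral_const_mul, hY0, hYsq]
      simp
    _ ≤ exp (K * variance X μ) := by linarith [add_one_le_exp (K * variance X μ)]
  have hXY : X = fun x ↦ Y x + μ[X] := by ext; simp [Y]
  rw [hXY, mgf_add_const, ← hXY, exp_add, mul_comm (exp _), mul_div_right_comm]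
  exact mul_le_mul_of_nonneg_right hmgfY (exp_pos _).le

theorem measure_sum_ge_le_exp_bernstein {ι : Type*} [Fintype ι] {X : ι → Ω → ℝ}
    (hmeas : ∀ i, Measurable (X i)) (hindep : iIndepFun X μ) (hX : ∀ i, MemLp (X i) 2 μ)
    {m v b a : ℝ} (hmean : ∀ i, μ[X i] ≤ m) (hvar : ∀ i, variance (X i) μ ≤ v)
    (hXb : ∀ i, ∀ᵐ x ∂μ, X i x - μ[X i] ≤ b) (hv : 0 < v) (hb : 0 ≤ b) (ha : 0 < a) :
    μ {x | Fintype.card ι * (m + a) ≤ ∑ i, X i x} ≤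
      ENNReal.ofReal (exp (-(Fintype.card ι * a ^ 2 / (2 * (v + a * b / 3))))) := by
  set T : ℝ := (Fintype.card ι : ℝ)
  set den := v + a * b / 3
  have hden : 0 < den := by positivity
  set s := a / den
  have hs : 0 ≤ s := by positivity
  have hsb : s * b < 3 := by
    rw [div_mul_eq_mul_div, div_lt_iff₀ hden]
    linarith [show den = v + a * b / 3 from rfl]
  set g := s * m + s ^ 2 * v / (2 * (1 - s * b / 3))
  -- `1 - s b / 3 = v / den`, which collapses the Chernoff exponent.
  have hg : -s * (T * (m + a)) + T * g = -(T * a ^ 2 / (2 * den)) := by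
    simp only [g, s, den]
    field_simp
    ring
  have hmgf (i : ι) : mgf (X i) μ s ≤ exp g := by
    refine (mgf_le_exp_bernstein (hX i) (hXb i) hb hs hsb).trans (exp_le_exp.mpr ?_)
    have hsb3 : 0 < 1 - s * b / 3 := by linarith
    simp only [g]
    gcongr
    exacts [hmean i, hvar i]
  have hint (i : ι) : Integrable (fun x ↦ exp (s * X i x)) μ :=
    integrable_exp_mul_of_ae_le (hmeas i).aemeasurable
      ((hXb i).mono fun x hx ↦ sub_le_iff_le_add'.mp hx) hs
  have hsum : mgf (∑ i, X i) μ s ≤ exp (T * g) := by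
    rw [hindep.mgf_sum hmeas]
    calc ∏ i, mgf (X i) μ s ≤ ∏ _i : ι, exp g :=
          Finset.prod_le_prod (fun _ _ ↦ mgf_nonneg) fun i _ ↦ hmgf i
      _ = exp (T * g) := by rw [Finset.prod_const, Finset.card_univ, ← exp_nat_mul]
  have hcher := measure_ge_le_exp_mul_mgf (X := ∑ i, X i) (T * (m + a)) hs
    (hindep.integrable_exp_mul_sum hmeas (s := Finset.univ) fun i _ ↦ hint i)
  simp only [Finset.sum_apply] at hcher
  rw [← ofReal_measureReal, ← hg, exp_add]
  exact ENNReal.ofReal_le_ofReal (hcher.trans (mul_le_mul_of_nonneg_left hsum (exp_pos _).le))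

theorem measure_sum_div_card_ge_le_of_sample_size {ι : Type*} [Fintype ι] {X : ι → Ω → ℝ}
    (hmeas : ∀ i, Measurable (X i)) (hindep : iIndepFun X μ) (hX : ∀ i, MemLp (X i) 2 μ)
    {m v b a δ : ℝ} (hmean : ∀ i, μ[X i] ≤ m) (hvar : ∀ i, variance (X i) μ ≤ v)
    (hXb : ∀ i, ∀ᵐ x ∂μ, X i x - μ[X i] ≤ b) (hv : 0 < v) (hb : 0 ≤ b) (ha : 0 < a)
    (hδ : δ ∈ Set.Ioo 0 1)
    (hT : (Fintype.card ι : ℝ) ≥ (2 * v / a ^ 2 + 2 * b / (3 * a)) * log (1 / δ)) :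
    μ {x | (∑ i, X i x) / Fintype.card ι ≥ m + a} ≤ ENNReal.ofReal δ := by
  set T : ℝ := (Fintype.card ι : ℝ)
  have hlog : log (1 / δ) ≤ T * a ^ 2 / (2 * (v + a * b / 3)) := by
    have hcoef : 2 * v / a ^ 2 + 2 * b / (3 * a) = 2 * (v + a * b / 3) / a ^ 2 := by
      field_simp
    rw [hcoef, ge_iff_le, div_mul_eq_mul_div, div_le_iff₀ (by positivity)] at hT
    rw [le_div_iff₀ (by positivity)]
    linarith
  have hTpos : 0 < T := by
    have hlog_pos : 0 < log (1 / δ) := log_pos (by rw [one_div, one_lt_inv₀ hδ.1]; exact hδ.2)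
    by_contra! hT0
    rw [le_antisymm hT0 (Nat.cast_nonneg _), zero_mul, zero_div] at hlog
    linarith
  have hexp : exp (-(T * a ^ 2 / (2 * (v + a * b / 3)))) ≤ δ := calc
    _ ≤ exp (-log (1 / δ)) := exp_le_exp.mpr (neg_le_neg hlog)
    _ = δ := by rw [one_div, log_inv, neg_neg, exp_log hδ.1]
  have hevent : {x | (∑ i, X i x) / T ≥ m + a} = {x | T * (m + a) ≤ ∑ i, X i x} := by
    ext x
    rw [Set.mem_ofPred_eq, Set.mem_ofPred_eq, ge_iff_le, le_div_iff₀ hTpos, mul_comm]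
  rw [hevent]
  exact (measure_sum_ge_le_exp_bernstein hmeas hindep hX hmean hvar hXb hv hb ha).trans
    (ENNReal.ofReal_le_ofReal hexp)

end Bernstein

section SpectralGap

open scoped MatrixOrder

variable {n : Type*} [Fintype n]

lemma Matrix.PosSemidef.trace_mul_nonneg {𝕜 : Type*} [RCLike 𝕜] {A B : Matrix n n 𝕜}
    (hA : A.PosSemidef) (hB : B.PosSemidef) : 0 ≤ (A * B).trace := by
  classical
  obtain ⟨C, rfl⟩ := CStarAlgebra.nonneg_iff_eq_star_mul_self.mp hB.nonneg
  rw [← Matrix.mul_assoc, trace_mul_cycle]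
  exact (hA.mul_mul_conjTranspose_same C).trace_nonneg

lemma star_dotProduct_self_eq_sum_norm_sq (φ : n → ℂ) :
    star φ ⬝ᵥ φ = ((∑ i, ‖φ i‖ ^ 2 : ℝ) : ℂ) := by
  simp [dotProduct, Complex.conj_mul']

lemma star_ofReal_smul_dotProduct_ofReal_smul (t : ℝ) (φ χ : n → ℂ) :
    star ((t : ℂ) • φ) ⬝ᵥ ((t : ℂ) • χ) = ((t ^ 2 : ℝ) : ℂ) * (star φ ⬝ᵥ χ) := by
  simp only [dotProduct_smul, star_smul, smul_dotProduct, Complex.star_def, Complex.conj_ofReal,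
    smul_eq_mul]
  push_cast
  ring

lemma re_star_dotProduct_mulVec_le_of_unit {L : Matrix n n ℂ} {ψ : n → ℂ} {γ : ℝ}
    (hgap : ∀ φ : n → ℂ, ∑ i, ‖φ i‖ ^ 2 = 1 → star ψ ⬝ᵥ φ = 0 →
      (star φ ⬝ᵥ (L *ᵥ φ)).re ≤ γ)
    {φ : n → ℂ} (hφ : star ψ ⬝ᵥ φ = 0) :
    (star φ ⬝ᵥ (L *ᵥ φ)).re ≤ γ * (star φ ⬝ᵥ φ).re := by
  rcases eq_or_ne φ 0 with rfl | hφ0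
  · simp
  set N := (star φ ⬝ᵥ φ).re
  have hN : 0 < N := (Complex.pos_iff.mp (dotProduct_star_self_pos_iff.mpr hφ0)).1
  set r := (√N)⁻¹
  have hr : r ^ 2 * N = 1 := by rw [inv_pow, sq_sqrt hN.le, inv_mul_cancel₀ hN.ne']
  have hunit := hgap ((r : ℂ) • φ) ?_ ?_
  · rw [mulVec_smul, star_ofReal_smul_dotProduct_ofReal_smul, Complex.re_ofReal_mul] at hunit
    calc (star φ ⬝ᵥ (L *ᵥ φ)).re = N * (r ^ 2 * (star φ ⬝ᵥ (L *ᵥ φ)).re) := by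
          rw [← mul_assoc, mul_comm N, hr, one_mul]
      _ ≤ N * γ := by gcongr
      _ = γ * N := mul_comm _ _
  · rw [← Complex.ofReal_re (∑ i, _), ← star_dotProduct_self_eq_sum_norm_sq,
      star_ofReal_smul_dotProduct_ofReal_smul, Complex.re_ofReal_mul, hr]
  · simp [dotProduct_smul, hφ]

lemma star_add_smul_dotProduct_mulVec_add_smul_of_mulVec_eq_zero {A : Matrix n n ℂ}
    {ψ : n → ℂ} (hA : A.IsHermitian) (hAψ : A *ᵥ ψ = 0) (φ : n → ℂ) (c : ℂ) :
    star (φ + c • ψ) ⬝ᵥ (A *ᵥ (φ + c • ψ)) = star φ ⬝ᵥ (A *ᵥ φ) := by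
  have hψA : star ψ ᵥ* A = 0 := by rw [← hA.eq, ← star_mulVec, hAψ, star_zero]
  rw [mulVec_add, mulVec_smul, hAψ, smul_zero, add_zero, star_add, add_dotProduct, star_smul,
    smul_dotProduct, dotProduct_mulVec (star ψ), hψA, zero_dotProduct, smul_zero, add_zero]

lemma trace_vecMulVec_star_mul (ψ : n → ℂ) (ρ : Matrix n n ℂ) :
    (vecMulVec ψ (star ψ) * ρ).trace = star ψ ⬝ᵥ (ρ *ᵥ ψ) := by
  rw [vecMulVec_mul, trace_vecMulVec, dotProduct_comm, dotProduct_mulVec]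

variable [DecidableEq n]

lemma le_smul_one_add_smul_vecMulVec_of_gap {L : Matrix n n ℂ} {ψ : n → ℂ} {γ : ℝ}
    (hL : L.IsHermitian) (hψ : star ψ ⬝ᵥ ψ = 1) (hLψ : L *ᵥ ψ = ψ)
    (hgap : ∀ φ : n → ℂ, star ψ ⬝ᵥ φ = 0 → (star φ ⬝ᵥ (L *ᵥ φ)).re ≤ γ * (star φ ⬝ᵥ φ).re) :
    L ≤ (γ : ℂ) • 1 + ((1 - γ : ℝ) : ℂ) • vecMulVec ψ (star ψ) := by
  set M := (γ : ℂ) • 1 + ((1 - γ : ℝ) : ℂ) • vecMulVec ψ (star ψ)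
  have hP (v : n → ℂ) : vecMulVec ψ (star ψ) *ᵥ v = (star ψ ⬝ᵥ v) • ψ := by
    rw [vecMulVec_mulVec, op_smul_eq_smul]
  have hherm : (M - L).IsHermitian :=
    ((isHermitian_one.smul (Complex.conj_ofReal γ)).add
      ((posSemidef_vecMulVec_self_star ψ).isHermitian.smul (Complex.conj_ofReal _))).sub hL
  have hψ0 : (M - L) *ᵥ ψ = 0 := by
    rw [sub_mulVec, hLψ, add_mulVec, smul_mulVec, smul_mulVec, hP, hψ, one_mulVec]
    push_cast
    module
  refine Matrix.le_iff.mpr (PosSemidef.of_dotProduct_mulVec_nonneg hherm fun x ↦ ?_)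
  -- Only the component of `x` orthogonal to `ψ` matters, because `(M - L) ψ = 0`.
  obtain ⟨φ, c, hφ, rfl⟩ : ∃ φ c, star ψ ⬝ᵥ φ = 0 ∧ x = φ + c • ψ :=
    ⟨x - (star ψ ⬝ᵥ x) • ψ, star ψ ⬝ᵥ x, by simp [dotProduct_sub, dotProduct_smul, hψ], by simp⟩
  rw [star_add_smul_dotProduct_mulVec_add_smul_of_mulVec_eq_zero hherm hψ0, Complex.nonneg_iff]
  refine ⟨?_, (hherm.im_star_dotProduct_mulVec_self φ).symm⟩
  have hMφ : (M - L) *ᵥ φ = (γ : ℂ) • φ - L *ᵥ φ := by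
    rw [sub_mulVec, add_mulVec, smul_mulVec, smul_mulVec, hP, hφ, one_mulVec, zero_smul,
      smul_zero, add_zero]
  rw [hMφ, dotProduct_sub, dotProduct_smul, smul_eq_mul, Complex.sub_re, Complex.re_ofReal_mul]
  linarith [hgap φ hφ]

lemma re_trace_mul_le_of_gap {L ρ : Matrix n n ℂ} {ψ : n → ℂ} {γ : ℝ}
    (hL : L.IsHermitian) (hψ : star ψ ⬝ᵥ ψ = 1) (hLψ : L *ᵥ ψ = ψ)
    (hgap : ∀ φ : n → ℂ, star ψ ⬝ᵥ φ = 0 → (star φ ⬝ᵥ (L *ᵥ φ)).re ≤ γ * (star φ ⬝ᵥ φ).re)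
    (hρ : ρ.PosSemidef) (hρtr : ρ.trace = 1) :
    ((L * ρ).trace).re ≤ γ + (1 - γ) * (star ψ ⬝ᵥ (ρ *ᵥ ψ)).re := by
  have h := (Matrix.le_iff.mp
    (le_smul_one_add_smul_vecMulVec_of_gap hL hψ hLψ hgap)).trace_mul_nonneg hρ
  rw [sub_mul, trace_sub, sub_nonneg, add_mul, trace_add, smul_mul_assoc, smul_mul_assoc, one_mul,
    trace_smul, trace_smul, hρtr, trace_vecMulVec_star_mul] at h
  simpa using (Complex.le_def.mp h).1

lemma re_trace_mul_le_one_sub_div_of_gap {L ρ : Matrix n n ℂ} {ψ : n → ℂ} {τ ε : ℝ}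
    (hL : L.IsHermitian) (hψ : ∑ i, ‖ψ i‖ ^ 2 = 1) (hLψ : L *ᵥ ψ = ψ) (hτ : 0 < τ)
    (hgap : ∀ φ : n → ℂ, ∑ i, ‖φ i‖ ^ 2 = 1 → star ψ ⬝ᵥ φ = 0 →
      (star φ ⬝ᵥ (L *ᵥ φ)).re ≤ 1 - 1 / τ)
    (hρ : ρ.PosSemidef) (hρtr : ρ.trace = 1) (hfid : (star ψ ⬝ᵥ (ρ *ᵥ ψ)).re ≤ 1 - ε) :
    ((L * ρ).trace).re ≤ 1 - ε / τ := by
  have hψ1 : star ψ ⬝ᵥ ψ = 1 := by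
    rw [star_dotProduct_self_eq_sum_norm_sq, hψ, Complex.ofReal_one]
  have h := re_trace_mul_le_of_gap hL hψ1 hLψ
    (fun φ hφ ↦ re_star_dotProduct_mulVec_le_of_unit hgap hφ) hρ hρtr
  have hfid' : 1 / τ * (star ψ ⬝ᵥ (ρ *ᵥ ψ)).re ≤ 1 / τ * (1 - ε) := by gcongr
  rw [sub_sub_cancel] at h
  linarith [show 1 - 1 / τ + 1 / τ * (1 - ε) = 1 - ε / τ by ring]

end SpectralGap

theorem improved_clifford_soundness_general {d : ℕ}
    (L ρ : Matrix (Fin d) (Fin d) ℂ)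
    (hL0 : L.PosSemidef)
    (ψ : Fin d → ℂ) (hψ : ∑ i, ‖ψ i‖ ^ 2 = 1) (hLψ : L *ᵥ ψ = ψ)
    (τ : ℝ) (hτ : 1 ≤ τ)
    (hgap : ∀ φ : Fin d → ℂ, (∑ i, ‖φ i‖ ^ 2 = 1) → (star ψ ⬝ᵥ φ = 0) →
      (star φ ⬝ᵥ (L *ᵥ φ)).re ≤ 1 - 1 / τ)
    (hρ : ρ.PosSemidef) (hρtr : ρ.trace = 1)
    {Ω : Type*} [MeasurableSpace Ω] (μ : Measure Ω) [IsProbabilityMeasure μ]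
    (m T : ℕ) (δ ε ε' : ℝ) (hδ : δ ∈ Set.Ioo (0 : ℝ) 1)
    (hεε' : ε > τ * ε')
    (ω : Fin T → Ω → ℝ) (hmeas : ∀ t, Measurable (ω t))
    (hindep : iIndepFun ω μ)
    (hmean : ∀ t, ∫ x, ω t x ∂μ = ((L * ρ).trace).re)
    (hbound : ∀ t, ∀ᵐ x ∂μ, ω t x ∈ Set.Icc (-1 : ℝ) (2 ^ m))
    (hvar : ∀ t, variance (ω t) μ ≤ 3.25)
    (hT : (T : ℝ) ≥ (6.5 / (ε / τ - ε') ^ 2 + 2 * 2 ^ m / (3 * (ε / τ - ε')))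
      * Real.log (1 / δ))
    (hfid : (star ψ ⬝ᵥ (ρ *ᵥ ψ)).re < 1 - ε) :
    μ {x | (∑ t, ω t x) / T ≥ 1 - ε'} ≤ ENNReal.ofReal δ := by
  have hτ0 : 0 < τ := by linarith
  have ha : 0 < ε / τ - ε' := by rw [sub_pos, lt_div_iff₀ hτ0]; linarith
  have hmean_le : ((L * ρ).trace).re ≤ 1 - ε / τ :=
    re_trace_mul_le_one_sub_div_of_gap hL0.isHermitian hψ hLψ hτ0 hgap hρ hρtr hfid.le
  have hmean_nonneg : 0 ≤ ((L * ρ).trace).re := (Complex.le_def.mp (hL0.trace_mul_nonneg hρ)).1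
  have hdev (t : Fin T) : ∀ᵐ x ∂μ, ω t x - μ[ω t] ≤ 2 ^ m := by
    filter_upwards [hbound t] with x hx
    linarith [hx.2, hmean t]
  have hbern := measure_sum_div_card_ge_le_of_sample_size hmeas hindep
    (fun t ↦ memLp_of_bounded (hbound t) (hmeas t).aestronglyMeasurable 2)
    (fun t ↦ (hmean t).trans_le hmean_le) hvar hdev (by norm_num) (by positivity) ha hδ
    (by convert hT using 4 <;> norm_num)
  simpa using hbern

/-- Soundness-only guarantee for the improved level-`m` shadow overlap protocol with random
Clifford measurements: if `ε > τε'`, `T ≥ (6.5/(ε/τ−ε')² + (2·2^m)/(3(ε/τ−ε')))·ln(1/δ)` and the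
fidelity satisfies `⟨ψ|ρ|ψ⟩ < 1 − ε`, then the empirical shadow overlap exceeds the threshold
`1 − ε'` with probability at most `δ`. -/
theorem improved_clifford_soundness {d : ℕ}
    (L ρ : Matrix (Fin d) (Fin d) ℂ)
    (hL : L.IsHermitian) (hL0 : L.PosSemidef)
    (hL1 : ((1 : Matrix (Fin d) (Fin d) ℂ) - L).PosSemidef)
    (ψ : Fin d → ℂ) (hψ : ∑ i, ‖ψ i‖ ^ 2 = 1) (hLψ : L *ᵥ ψ = ψ)
    (τ : ℝ) (hτ : 1 ≤ τ)
    (hgap : ∀ φ : Fin d → ℂ, (∑ i, ‖φ i‖ ^ 2 = 1) → (star ψ ⬝ᵥ φ = 0) →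
      (star φ ⬝ᵥ (L *ᵥ φ)).re ≤ 1 - 1 / τ)
    (hρ : ρ.PosSemidef) (hρtr : ρ.trace = 1)
    {Ω : Type*} [MeasurableSpace Ω] (μ : Measure Ω) [IsProbabilityMeasure μ]
    (m T : ℕ) (hm : 1 ≤ m) (δ ε ε' : ℝ) (hδ : δ ∈ Set.Ioo (0 : ℝ) 1) (hε : 0 < ε)
    (hε' : 0 ≤ ε') (hεε' : ε > τ * ε')
    (ω : Fin T → Ω → ℝ) (hmeas : ∀ t, Measurable (ω t))
    (hindep : iIndepFun ω μ)
    (hident : ∀ t t', Measure.map (ω t) μ = Measure.map (ω t') μ)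
    (hmean : ∀ t, ∫ x, ω t x ∂μ = ((L * ρ).trace).re)
    (hbound : ∀ t, ∀ᵐ x ∂μ, ω t x ∈ Set.Icc (-1 : ℝ) (2 ^ m))
    (hvar : ∀ t, variance (ω t) μ ≤ 3.25)
    (hT : (T : ℝ) ≥ (6.5 / (ε / τ - ε') ^ 2 + 2 * 2 ^ m / (3 * (ε / τ - ε')))
      * Real.log (1 / δ))
    (hfid : (star ψ ⬝ᵥ (ρ *ᵥ ψ)).re < 1 - ε) :
    μ {x | (∑ t, ω t x) / T ≥ 1 - ε'} ≤ ENNReal.ofReal δ :=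
  improved_clifford_soundness_general L ρ hL0 ψ hψ hLψ τ hτ hgap hρ hρtr μ m T δ ε ε' hδ hεε' ω
    hmeas hindep hmean hbound hvar hT hfid
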